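/- arXiv:2403.00340 — 13 statements merged into one kernel-verified Lean document; each statement's English description precedes it below -/
import Mathlib

section
/- Let ρ_C, ρ_L, α, I_0 be non-negative reals and τ_C, τ_B, τ_I positive reals. Suppose C, L, B : ℝ → ℝ are differentiable functions satisfying, for all t ≥ 0, the system C'(t) = C(t)(ρ_C(L(t)+B(t)+I_0) − 1/τ_C), L'(t) = ρ_L L(t) − α C(t) L(t), B'(t) = I_0/τ_I − B(t)(α C(t) + 1/τ_B), with non-negative initial data C(0) ≥ 0, L(0) ≥ 0, B(0) ≥ 0. Then C(t) ≥ 0, L(t) ≥ 0 and B(t) ≥ 0 for all t ≥ 0. -/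
open Set Real

/-- Auxiliary lemma: if `f` is differentiable with `f 0 ≥ 0` and, whenever `f t ≤ 0`
(for `t ≥ 0`), the derivative satisfies `a t * f t ≤ f' t` for a continuous function `a`,
then `f` stays nonnegative on `[0, ∞)`. -/
lemma nonneg_of_deriv_ge_linear {f a : ℝ → ℝ}
    (hf : Differentiable ℝ f) (ha : Continuous a) (h0 : 0 ≤ f 0)
    (hderiv : ∀ t : ℝ, 0 ≤ t → f t ≤ 0 → a t * f t ≤ deriv f t) :
    ∀ t : ℝ, 0 ≤ t → 0 ≤ f t := by
  intro t₁ ht₁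
  by_contra hneg
  push_neg at hneg
  -- there is a zero of f in [0, t₁]
  have hzero : ∃ s ∈ Icc (0:ℝ) t₁, f s = 0 := by
    have := intermediate_value_Icc' ht₁ (hf.continuous.continuousOn)
    have h0m : (0:ℝ) ∈ Icc (f t₁) (f 0) := ⟨hneg.le, h0⟩
    obtain ⟨s, hs, hfs⟩ := this h0m
    exact ⟨s, hs, hfs⟩
  have hSne : Set.Nonempty {s | s ∈ Icc (0:ℝ) t₁ ∧ f s = 0} := by
    obtain ⟨s, hs, hfs⟩ := hzero; exact ⟨s, hs, hfs⟩
  have hSclosed : IsClosed {s | s ∈ Icc (0:ℝ) t₁ ∧ f s = 0} :=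
    isClosed_Icc.inter (isClosed_singleton.preimage hf.continuous)
  have hSbdd : BddAbove {s | s ∈ Icc (0:ℝ) t₁ ∧ f s = 0} := ⟨t₁, fun x hx => hx.1.2⟩
  obtain ⟨t₀, ht₀S, ht₀ub⟩ :
      ∃ t₀ ∈ {s | s ∈ Icc (0:ℝ) t₁ ∧ f s = 0},
        ∀ u ∈ {s | s ∈ Icc (0:ℝ) t₁ ∧ f s = 0}, u ≤ t₀ :=
    ⟨_, hSclosed.csSup_mem hSne hSbdd, fun u hu => le_csSup hSbdd hu⟩
  have hft₀ : f t₀ = 0 := ht₀S.2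
  have ht₀mem : t₀ ∈ Icc (0:ℝ) t₁ := ht₀S.1
  have ht₀lt : t₀ < t₁ := lt_of_le_of_ne ht₀mem.2 (by rintro rfl; rw [hft₀] at hneg; exact lt_irrefl 0 hneg)
  -- f ≤ 0 on [t₀, t₁]
  have hfle : ∀ s ∈ Icc t₀ t₁, f s ≤ 0 := by
    intro s hs
    by_contra hpos
    push_neg at hpos
    have hst₁ : s < t₁ := lt_of_le_of_ne hs.2 (by rintro rfl; exact absurd hneg (not_lt.2 hpos.le))
    have := intermediate_value_Icc' hst₁.le (hf.continuous.continuousOn)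
    obtain ⟨u, hu, hfu⟩ := this ⟨hneg.le, hpos.le⟩
    have : u ≤ t₀ := ht₀ub u ⟨⟨le_trans ht₀mem.1 (le_trans hs.1 hu.1), hu.2⟩, hfu⟩
    have hsu : t₀ < s := by
      rcases lt_or_eq_of_le hs.1 with h | h
      · exact h
      · exfalso; rw [← h] at hpos; rw [hft₀] at hpos; exact lt_irrefl 0 hpos
    linarith [hu.1]
  -- bound on a
  obtain ⟨K, hK⟩ := (isCompact_Icc (a := (0:ℝ)) (b := t₁)).exists_bound_of_continuousOn
    ha.continuousOn
  -- Grönwall on h = -f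
  have hgron := le_gronwallBound_of_liminf_deriv_right_le
    (f := fun s => -f s) (f' := fun s => -deriv f s) (δ := 0) (K := K) (ε := 0)
    (a := t₀) (b := t₁)
    (hf.continuous.neg.continuousOn)
    (fun x hx r hr => (((hf x).hasDerivAt.neg).hasDerivWithinAt (s := Ici x)).liminf_right_slope_le hr)
    (by simp [hft₀])
    (by
      intro x hx
      have hx0 : (0:ℝ) ≤ x := le_trans ht₀mem.1 hx.1
      have hxle : f x ≤ 0 := hfle x ⟨hx.1, hx.2.le⟩
      have h1 : a x * f x ≤ deriv f x := hderiv x hx0 hxle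
      have h2 : a x ≤ K := le_trans (le_abs_self _) (hK x ⟨hx0, hx.2.le⟩)
      show -deriv f x ≤ K * (-f x) + 0
      nlinarith [mul_le_mul_of_nonneg_right h2 (neg_nonneg.2 hxle)])
  have := hgron t₁ ⟨ht₀lt.le, le_refl t₁⟩
  rw [gronwallBound_ε0_δ0] at this
  have h3 : -f t₁ ≤ 0 := this
  linarith

/-- **Positivity of solutions.**
If `C, L, B : ℝ → ℝ` are differentiable and satisfy, for all `t ≥ 0`, the CAR T-cell
therapy system
`C' = C(ρC(L + B + I₀) − 1/τC)`, `L' = ρL·L − α·C·L`, `B' = I₀/τI − B(α·C + 1/τB)`,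
with non-negative parameters `ρC, ρL, α, I₀`, positive parameters `τC, τB, τI`, and
non-negative initial data, then `C`, `L` and `B` stay non-negative for all `t ≥ 0`. -/
theorem positivity_of_solutions
    (ρC ρL α I₀ τC τB τI : ℝ)
    (hρC : 0 ≤ ρC) (hρL : 0 ≤ ρL) (hα : 0 ≤ α) (hI₀ : 0 ≤ I₀)
    (hτC : 0 < τC) (hτB : 0 < τB) (hτI : 0 < τI)
    (C L B : ℝ → ℝ)
    (hC : Differentiable ℝ C) (hL : Differentiable ℝ L) (hB : Differentiable ℝ B)
    (hCode : ∀ t : ℝ, 0 ≤ t →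
      deriv C t = C t * (ρC * (L t + B t + I₀) - 1 / τC))
    (hLode : ∀ t : ℝ, 0 ≤ t →
      deriv L t = ρL * L t - α * C t * L t)
    (hBode : ∀ t : ℝ, 0 ≤ t →
      deriv B t = I₀ / τI - B t * (α * C t + 1 / τB))
    (hC0 : 0 ≤ C 0) (hL0 : 0 ≤ L 0) (hB0 : 0 ≤ B 0) :
    ∀ t : ℝ, 0 ≤ t → 0 ≤ C t ∧ 0 ≤ L t ∧ 0 ≤ B t := by
  have hCpos : ∀ t : ℝ, 0 ≤ t → 0 ≤ C t := by
    apply nonneg_of_deriv_ge_linear hC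
      (a := fun t => ρC * (L t + B t + I₀) - 1 / τC)
      (by have := hL.continuous; have := hB.continuous; fun_prop) hC0
    intro t ht _
    rw [hCode t ht]; ring_nf; exact le_refl _
  have hLpos : ∀ t : ℝ, 0 ≤ t → 0 ≤ L t := by
    apply nonneg_of_deriv_ge_linear hL
      (a := fun t => ρL - α * C t)
      (by have := hC.continuous; fun_prop) hL0
    intro t ht _
    rw [hLode t ht]; ring_nf; exact le_refl _
  have hBpos : ∀ t : ℝ, 0 ≤ t → 0 ≤ B t := by
    apply nonneg_of_deriv_ge_linear hB
      (a := fun t => -(α * C t + 1 / τB))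
      (by have := hC.continuous; fun_prop) hB0
    intro t ht _
    rw [hBode t ht]
    have : 0 ≤ I₀ / τI := div_nonneg hI₀ hτI.le
    nlinarith
  exact fun t ht => ⟨hCpos t ht, hLpos t ht, hBpos t ht⟩
end

section
/- Let ρ_C, ρ_L, α be positive reals, I_0 ≥ 0 and τ_C, τ_B, τ_I positive. The point P_3 = (ρ_L/α, 1/(τ_C ρ_C) − I_0(1 + τ_B/(τ_I(1 + τ_B ρ_L))), I_0/(τ_I(ρ_L + 1/τ_B))) is an equilibrium of the system, i.e. the vector field F(C,L,B) = (C(ρ_C(L+B+I_0) − 1/τ_C), ρ_L L − α C L, I_0/τ_I − B(α C + 1/τ_B)) vanishes at P_3. -/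
/-- **`P₃` is an equilibrium.**
The point
`P₃ = (ρL/α, 1/(τCρC) − I₀(1 + τB/(τI(1 + τBρL))), I₀/(τI(ρL + 1/τB)))`
is an equilibrium of the CAR T-cell therapy model: the vector field
`F(C, L, B) = (C(ρC(L+B+I₀) − 1/τC), ρL·L − α·C·L, I₀/τI − B(α·C + 1/τB))`
vanishes at `P₃`. -/
theorem P3_is_equilibrium
    (ρC ρL α I₀ τC τB τI : ℝ)
    (hρC : 0 < ρC) (hρL : 0 < ρL) (hα : 0 < α) (hI₀ : 0 ≤ I₀)
    (hτC : 0 < τC) (hτB : 0 < τB) (hτI : 0 < τI)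
    (F : ℝ × ℝ × ℝ → ℝ × ℝ × ℝ)
    (hF : F = fun p : ℝ × ℝ × ℝ =>
      (p.1 * (ρC * (p.2.1 + p.2.2 + I₀) - 1 / τC),
       ρL * p.2.1 - α * p.1 * p.2.1,
       I₀ / τI - p.2.2 * (α * p.1 + 1 / τB))) :
    F (ρL / α,
       1 / (τC * ρC) - I₀ * (1 + τB / (τI * (1 + τB * ρL))),
       I₀ / (τI * (ρL + 1 / τB))) = (0, 0, 0) := by
  subst hF
  have h1 : (1 : ℝ) + τB * ρL ≠ 0 := by positivity
  have h2 : ρL + 1 / τB ≠ 0 := by positivity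
  refine Prod.ext ?_ (Prod.ext ?_ ?_) <;> simp only <;>
    field_simp <;> ring
end

section
/- Let ρ_C, ρ_L, α, I_0 be non-negative reals and τ_C, τ_B, τ_I positive. The characteristic polynomial of the Jacobian matrix J evaluated at the equilibrium P_1 = (0, 0, I_0 τ_B/τ_I) factors as (λ − ρ_L)(λ + 1/τ_B)(λ − (ρ_C I_0 (1 + τ_B/τ_I) − 1/τ_C)); equivalently, the eigenvalues of J(P_1) are λ_1 = ρ_L, λ_2 = −1/τ_B, and λ_3 = ρ_C I_0 (1 + τ_B/τ_I) − 1/τ_C. -/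
/-- **Eigenvalues at `P₁`.**
The characteristic polynomial of the Jacobian of the CAR T-cell therapy model at the
equilibrium `P₁ = (0, 0, I₀τB/τI)` factors as
`(λ − ρL)(λ + 1/τB)(λ − (ρC·I₀(1 + τB/τI) − 1/τC))`; equivalently, the eigenvalues of
`J(P₁)` are `λ₁ = ρL`, `λ₂ = −1/τB` and `λ₃ = ρC·I₀(1 + τB/τI) − 1/τC`. -/
theorem charpoly_at_P1
    (ρC ρL α I₀ τC τB τI : ℝ)
    (hρC : 0 ≤ ρC) (hρL : 0 ≤ ρL) (hα : 0 ≤ α) (hI₀ : 0 ≤ I₀)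
    (hτC : 0 < τC) (hτB : 0 < τB) (hτI : 0 < τI)
    (J : ℝ → ℝ → ℝ → Matrix (Fin 3) (Fin 3) ℝ)
    (hJ : J = fun C L B =>
      !![ρC * (L + B + I₀) - 1 / τC, ρC * C, ρC * C;
         -(α * L), ρL - α * C, 0;
         -(α * B), 0, -(α * C) - 1 / τB]) :
    (J 0 0 (I₀ * τB / τI)).charpoly =
      (Polynomial.X - Polynomial.C ρL) *
      (Polynomial.X + Polynomial.C (1 / τB)) *
      (Polynomial.X - Polynomial.C (ρC * I₀ * (1 + τB / τI) - 1 / τC)) := by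
  subst hJ
  refine Polynomial.funext fun x => ?_
  simp [Matrix.charpoly, Matrix.det_fin_three, Matrix.charmatrix_apply,
    Matrix.one_apply, Matrix.diagonal_apply]
  field_simp
  ring
end

section
/- Let ρ_C, α, I_0 be non-negative reals, ρ_L > 0 and τ_C, τ_B, τ_I positive. Then the Jacobian matrix J evaluated at the equilibrium P_1 = (0, 0, I_0 τ_B/τ_I) has both a real eigenvalue ρ_L > 0 and a real eigenvalue −1/τ_B < 0; in particular P_1 is a saddle (linearly unstable) equilibrium. -/
/-- **`P₁` is a saddle.**
With `ρL > 0`, the Jacobian of the CAR T-cell therapy model at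
`P₁ = (0, 0, I₀τB/τI)` has both the real eigenvalue `ρL > 0` and the real eigenvalue
`−1/τB < 0`; in particular `P₁` is a saddle (linearly unstable) equilibrium. -/
theorem P1_is_saddle
    (ρC ρL α I₀ τC τB τI : ℝ)
    (hρC : 0 ≤ ρC) (hρL : 0 < ρL) (hα : 0 ≤ α) (hI₀ : 0 ≤ I₀)
    (hτC : 0 < τC) (hτB : 0 < τB) (hτI : 0 < τI)
    (J : ℝ → ℝ → ℝ → Matrix (Fin 3) (Fin 3) ℝ)
    (hJ : J = fun C L B =>
      !![ρC * (L + B + I₀) - 1 / τC, ρC * C, ρC * C;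
         -(α * L), ρL - α * C, 0;
         -(α * B), 0, -(α * C) - 1 / τB]) :
    Module.End.HasEigenvalue
        (Matrix.toLin' (J 0 0 (I₀ * τB / τI))) ρL ∧
      Module.End.HasEigenvalue
        (Matrix.toLin' (J 0 0 (I₀ * τB / τI))) (-(1 / τB)) ∧
      0 < ρL ∧ -(1 / τB) < 0 := by
  subst hJ
  refine ⟨?_, ?_, hρL, by simp; positivity⟩
  · apply Module.End.hasEigenvalue_of_hasEigenvector (x := ![0, 1, 0])
    constructor
    · rw [Module.End.mem_eigenspace_iff, Matrix.toLin'_apply]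
      funext i
      fin_cases i <;>
        simp [Matrix.mulVec, dotProduct, Fin.sum_univ_three]
    · intro h
      have := congrFun h 1
      simp at this
  · apply Module.End.hasEigenvalue_of_hasEigenvector (x := ![0, 0, 1])
    constructor
    · rw [Module.End.mem_eigenspace_iff, Matrix.toLin'_apply]
      funext i
      fin_cases i <;>
        simp [Matrix.mulVec, dotProduct, Fin.sum_univ_three]
    · intro h
      have := congrFun h 2
      simp at this
end

section
/- Let ρ_C, ρ_L, α > 0, I_0 ≥ 0 and τ_C, τ_B, τ_I > 0 with I_0 < 1/(τ_C ρ_C). Write C_2 = (1/α)(I_0/(τ_I(1/(τ_C ρ_C) − I_0)) − 1/τ_B) and B_2 = 1/(τ_C ρ_C) − I_0. Then the characteristic polynomial of the Jacobian J evaluated at P_2 = (C_2, 0, B_2) factors as (λ − (ρ_L − α C_2))·(λ² + (I_0/(τ_I(1/(τ_C ρ_C) − I_0))) λ + α ρ_C B_2 C_2); in particular its complex roots are λ_1 = ρ_L − α C_2 and λ_{2,3} = (1/2)(−I_0/(τ_I(1/(τ_C ρ_C) − I_0)) ± √(I_0²/(τ_I²(1/(τ_C ρ_C) − I_0)²) −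 4 α ρ_C B_2 C_2)). -/
/-- **Eigenvalues at `P₂`.**
With `I₀ < 1/(τCρC)`, `C₂ = (1/α)(I₀/(τI(1/(τCρC) − I₀)) − 1/τB)` and
`B₂ = 1/(τCρC) − I₀`, the characteristic polynomial of the Jacobian at
`P₂ = (C₂, 0, B₂)` factors as
`(λ − (ρL − α·C₂))·(λ² + (I₀/(τI(1/(τCρC) − I₀)))·λ + α·ρC·B₂·C₂)`;
in particular its complex roots are `λ₁ = ρL − α·C₂` and
`λ₂,₃ = (1/2)(−I₀/(τI(1/(τCρC) − I₀)) ± √(I₀²/(τI²(1/(τCρC) − I₀)²) − 4αρC·B₂·C₂))`. -/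
theorem charpoly_at_P2
    (ρC ρL α I₀ τC τB τI : ℝ)
    (hρC : 0 < ρC) (hρL : 0 < ρL) (hα : 0 < α) (hI₀ : 0 ≤ I₀)
    (hτC : 0 < τC) (hτB : 0 < τB) (hτI : 0 < τI)
    (hlt : I₀ < 1 / (τC * ρC))
    (C₂ B₂ a b : ℝ)
    (hC₂ : C₂ = (1 / α) * (I₀ / (τI * (1 / (τC * ρC) - I₀)) - 1 / τB))
    (hB₂ : B₂ = 1 / (τC * ρC) - I₀)
    (ha : a = I₀ / (τI * (1 / (τC * ρC) - I₀)))
    (hb : b = α * ρC * B₂ * C₂)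
    (J : ℝ → ℝ → ℝ → Matrix (Fin 3) (Fin 3) ℝ)
    (hJ : J = fun C L B =>
      !![ρC * (L + B + I₀) - 1 / τC, ρC * C, ρC * C;
         -(α * L), ρL - α * C, 0;
         -(α * B), 0, -(α * C) - 1 / τB]) :
    (J C₂ 0 B₂).charpoly =
        (Polynomial.X - Polynomial.C (ρL - α * C₂)) *
        (Polynomial.X ^ 2 + Polynomial.C a * Polynomial.X + Polynomial.C b) ∧
      ∀ z : ℂ, (Polynomial.aeval z) (J C₂ 0 B₂).charpoly = 0 ↔
        (z = ((ρL - α * C₂ : ℝ) : ℂ) ∨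
         z = (1 / 2) * (-(a : ℂ) + ((a ^ 2 - 4 * b : ℝ) : ℂ) ^ (1 / 2 : ℂ)) ∨
         z = (1 / 2) * (-(a : ℂ) - ((a ^ 2 - 4 * b : ℝ) : ℂ) ^ (1 / 2 : ℂ))) := by
  have hτCρC : τC * ρC ≠ 0 := by positivity
  have hα' : (α : ℝ) ≠ 0 := ne_of_gt hα
  -- the (0,0) entry vanishes
  have hpos : 0 < 1 / (τC * ρC) - I₀ := sub_pos.mpr hlt
  have hden : τI * (1 / (τC * ρC) - I₀) ≠ 0 := by positivity
  have h00 : ρC * (0 + B₂ + I₀) - 1 / τC = 0 := by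
    rw [hB₂]; field_simp; ring
  -- a = α C₂ + 1/τB
  have ha' : a = α * C₂ + 1 / τB := by
    rw [ha, hC₂]; field_simp; ring
  have hM : J C₂ 0 B₂ =
      !![0, ρC * C₂, ρC * C₂; 0, ρL - α * C₂, 0; -(α * B₂), 0, -a] := by
    subst hJ
    simp only [mul_zero, neg_zero, zero_add]
    rw [show ρC * (B₂ + I₀) - 1 / τC = 0 from by rw [hB₂]; field_simp; ring,
        show -(α * C₂) - 1 / τB = -a from by rw [ha']; ring]
  have hchar : (J C₂ 0 B₂).charpoly =
      (Polynomial.X - Polynomial.C (ρL - α * C₂)) *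
      (Polynomial.X ^ 2 + Polynomial.C a * Polynomial.X + Polynomial.C b) := by
    rw [hM, Matrix.charpoly, Matrix.det_fin_three]
    simp [Matrix.charmatrix_apply, Matrix.one_apply]
    simp only [hb, map_mul]
    ring
  refine ⟨hchar, fun z => ?_⟩
  set s : ℂ := ((a ^ 2 - 4 * b : ℝ) : ℂ) ^ (1 / 2 : ℂ) with hs
  have hs2 : s ^ 2 = ((a ^ 2 - 4 * b : ℝ) : ℂ) := by
    by_cases hw : ((a ^ 2 - 4 * b : ℝ) : ℂ) = 0
    · rw [hs, hw, Complex.zero_cpow (by norm_num : (1 / 2 : ℂ) ≠ 0)]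
      simp
    · rw [hs, sq, ← Complex.cpow_add _ _ hw]
      norm_num
  have hquad : ∀ w : ℂ, w ^ 2 + (a : ℂ) * w + (b : ℂ) =
      (w - (1 / 2) * (-(a : ℂ) + s)) * (w - (1 / 2) * (-(a : ℂ) - s)) := by
    intro w
    have : (s ^ 2 : ℂ) = (a : ℂ) ^ 2 - 4 * (b : ℂ) := by
      rw [hs2]; push_cast; ring
    linear_combination (1/4 : ℂ) * this
  rw [hchar]
  simp only [map_mul, map_add, map_sub, map_pow, Polynomial.aeval_X, Polynomial.aeval_C,
    mul_eq_zero, Complex.coe_algebraMap]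
  rw [hquad z]
  constructor
  · rintro (h | h)
    · left
      have := sub_eq_zero.mp h
      rw [this]; push_cast; ring
    · rcases mul_eq_zero.mp h with h | h
      · right; left; exact sub_eq_zero.mp h
      · right; right; exact sub_eq_zero.mp h
  · rintro (h | h | h)
    · left; rw [h]; push_cast; ring
    · right; rw [mul_eq_zero]; left; rw [sub_eq_zero]; exact h
    · right; rw [mul_eq_zero]; right; rw [sub_eq_zero]; exact h
end

section
/- Let ρ_C, ρ_L, α > 0 and τ_C, τ_B, τ_I > 0, and suppose (1/(τ_C ρ_C))(1 − τ_B/(τ_B + τ_I(1 + τ_B ρ_L))) < I_0 < 1/(τ_C ρ_C). Then every complex root of the characteristic polynomial of the Jacobian J evaluated at the equilibrium P_2 = (C_2, 0, B_2), where C_2 = (1/α)(I_0/(τ_I(1/(τ_C ρ_C) − I_0)) − 1/τ_B) and B_2 = 1/(τ_C ρ_C) − I_0, has strictly negative real part; i.e. P_2 is linearly asymptotically stable. -/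
open Polynomial

/-! At `P₂` the tumour coordinate `L` vanishes, so the second row of the Jacobian decouples:
`ρL - α C₂` is one eigenvalue, and the lower bound on `I₀` is exactly the inequality
`ρL < α C₂`. Since `P₂` is an equilibrium, the `(0,0)` entry vanishes, and the remaining
`2 × 2` block has negative trace `-(α C₂ + 1/τB)` and positive determinant `ρC C₂ · α B₂`,
so its eigenvalues lie in the open left half-plane. -/

theorem Matrix.charpoly_fin_three_of_row_one {R : Type*} [CommRing R] (c p q d r e : R) :
    (!![c, p, q; 0, d, 0; r, 0, e]).charpoly =
      (X - C d) * (X ^ 2 - C (c + e) * X + C (c * e - q * r)) := by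
  rw [Matrix.charpoly, Matrix.det_fin_three]
  simp
  ring

theorem Complex.re_neg_of_quadratic_eq_zero {a b : ℝ} (ha : 0 < a) (hb : 0 < b) {z : ℂ}
    (h : z ^ 2 + a * z + b = 0) : z.re < 0 := by
  have hre : z.re ^ 2 - z.im ^ 2 + a * z.re + b = 0 := by
    simpa [sq] using congrArg Complex.re h
  have him : z.im * (2 * z.re + a) = 0 := by
    have := congrArg Complex.im h
    simp [sq] at this
    linear_combination this
  by_contra! hre_nonneg
  have him_zero : z.im = 0 :=
    (mul_eq_zero.mp him).resolve_right (by linarith)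
  rw [him_zero] at hre
  nlinarith

theorem rhoL_lt_of_threshold_lt {ρL τB τI β I₀ : ℝ} (hρL : 0 ≤ ρL) (hτB : 0 < τB) (hτI : 0 < τI)
    (hlow : β * (1 - τB / (τB + τI * (1 + τB * ρL))) < I₀) (hhigh : I₀ < β) :
    ρL < I₀ / (τI * (β - I₀)) - 1 / τB := by
  have hD : 0 < τB + τI * (1 + τB * ρL) := by positivity
  have hβ : 0 < β - I₀ := by linarith
  rw [one_sub_div hD.ne', add_sub_cancel_left, mul_div_assoc', div_lt_iff₀ hD] at hlow
  rw [lt_sub_iff_add_lt, lt_div_iff₀ (by positivity)]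
  field_simp
  nlinarith

/-- **Asymptotic stability of `P₂`.**
If `(1/(τCρC))(1 − τB/(τB + τI(1 + τBρL))) < I₀ < 1/(τCρC)`, then every complex root
of the characteristic polynomial of the Jacobian of the CAR T-cell therapy model at
`P₂ = (C₂, 0, B₂)`, where `C₂ = (1/α)(I₀/(τI(1/(τCρC) − I₀)) − 1/τB)` and
`B₂ = 1/(τCρC) − I₀`, has strictly negative real part; i.e. `P₂` is linearly
asymptotically stable. -/
theorem P2_linearly_stable
    (ρC ρL α I₀ τC τB τI : ℝ)
    (hρC : 0 < ρC) (hρL : 0 < ρL) (hα : 0 < α)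
    (hτC : 0 < τC) (hτB : 0 < τB) (hτI : 0 < τI)
    (hlow : (1 / (τC * ρC)) * (1 - τB / (τB + τI * (1 + τB * ρL))) < I₀)
    (hhigh : I₀ < 1 / (τC * ρC))
    (C₂ B₂ : ℝ)
    (hC₂ : C₂ = (1 / α) * (I₀ / (τI * (1 / (τC * ρC) - I₀)) - 1 / τB))
    (hB₂ : B₂ = 1 / (τC * ρC) - I₀)
    (J : ℝ → ℝ → ℝ → Matrix (Fin 3) (Fin 3) ℝ)
    (hJ : J = fun C L B =>
      !![ρC * (L + B + I₀) - 1 / τC, ρC * C, ρC * C;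
         -(α * L), ρL - α * C, 0;
         -(α * B), 0, -(α * C) - 1 / τB]) :
    ∀ z : ℂ, (Polynomial.aeval z) (J C₂ 0 B₂).charpoly = 0 → z.re < 0 := by
  have hB₂_pos : 0 < B₂ := by rw [hB₂]; linarith
  have hρL_lt : ρL < α * C₂ := by
    rw [hC₂, one_div, mul_inv_cancel_left₀ hα.ne']
    exact rhoL_lt_of_threshold_lt hρL.le hτB hτI hlow hhigh
  have hC₂_pos : 0 < C₂ := pos_of_mul_pos_right (hρL.trans hρL_lt) hα.le
  have hJ₂ : J C₂ 0 B₂ = !![0, ρC * C₂, ρC * C₂; 0, ρL - α * C₂, 0;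
      -(α * B₂), 0, -(α * C₂) - 1 / τB] := by
    have hequil : ρC * (0 + B₂ + I₀) - 1 / τC = 0 := by rw [hB₂]; field_simp; ring
    rw [hJ]
    dsimp only
    rw [hequil, mul_zero, neg_zero]
  intro z hz
  rw [hJ₂, Matrix.charpoly_fin_three_of_row_one] at hz
  simp only [map_mul, map_sub, map_add, map_pow, aeval_X, aeval_C, Complex.coe_algebraMap,
    mul_eq_zero] at hz
  rcases hz with hz | hz
  · rw [sub_eq_zero.mp hz]
    simpa using hρL_lt
  · refine Complex.re_neg_of_quadratic_eq_zero (a := α * C₂ + 1 / τB) (b := ρC * C₂ * (α * B₂))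
      (by positivity) (by positivity) ?_
    push_cast at hz ⊢
    linear_combination hz
end

section
/- Let ρ_C, ρ_L, α > 0, I_0 ≥ 0 and τ_C, τ_B, τ_I > 0 with I_0 < 1/(τ_C ρ_C). Write C_2 = (1/α)(I_0/(τ_I(1/(τ_C ρ_C) − I_0)) − 1/τ_B) and B_2 = 1/(τ_C ρ_C) − I_0, and suppose B_2 C_2 > 0. Then the two roots λ_{2,3} of λ² + (I_0/(τ_I(1/(τ_C ρ_C) − I_0))) λ + α ρ_C B_2 C_2 are real if and only if 4/(τ_B τ_C³ ρ_C²) − (4 I_0/(τ_C² ρ_C))(1/τ_I + 3/τ_B) + I_0²(1/τ_I² + 8/(τ_I τ_C) + 12/(τ_B τ_C)) − 4 ρ_C I_0³(1/τ_I + 1/τ_B) ≥ 0. -/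
lemma quad_roots_real_iff (b c : ℝ) :
    (∀ z : ℂ, z ^ 2 + (b : ℂ) * z + (c : ℂ) = 0 → z.im = 0) ↔ b ^ 2 - 4 * c ≥ 0 := by
  constructor
  · intro h
    by_contra hneg
    push_neg at hneg
    set s := Real.sqrt (4 * c - b ^ 2) with hs
    have hs2 : s ^ 2 = 4 * c - b ^ 2 := Real.sq_sqrt (by linarith)
    have hspos : 0 < s := Real.sqrt_pos.mpr (by linarith)
    set z : ℂ := ⟨-b / 2, s / 2⟩ with hzdef
    have hz : z ^ 2 + (b : ℂ) * z + (c : ℂ) = 0 := by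
      apply Complex.ext <;>
        simp [hzdef, pow_two, Complex.mul_re, Complex.mul_im] <;> nlinarith [hs2]
    have := h z hz
    simp [hzdef] at this
    linarith
  · intro hd z hz
    set w : ℂ := z + (b : ℂ) / 2 with hw
    have hw2 : w ^ 2 = (((b ^ 2 - 4 * c) / 4 : ℝ) : ℂ) := by
      push_cast
      linear_combination hz
    set r := Real.sqrt ((b ^ 2 - 4 * c) / 4) with hr
    have hr2 : (r : ℝ) ^ 2 = (b ^ 2 - 4 * c) / 4 := Real.sq_sqrt (by linarith)
    have hfac : (w - (r : ℂ)) * (w + (r : ℂ)) = 0 := by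
      have hcast : ((r : ℂ)) ^ 2 = (((b ^ 2 - 4 * c) / 4 : ℝ) : ℂ) := by
        push_cast [← hr2]; ring
      linear_combination hw2 - hcast
    have himw : w.im = z.im := by simp [hw]
    rcases mul_eq_zero.mp hfac with h1 | h1
    · have hwe : w = (r : ℂ) := by linear_combination h1
      rw [← himw, hwe]; simp
    · have hwe : w = -(r : ℂ) := by linear_combination h1
      rw [← himw, hwe]; simp

/-- **Reality of `λ₂,₃` at `P₂`.**
With `I₀ < 1/(τCρC)`, `C₂ = (1/α)(I₀/(τI(1/(τCρC) − I₀)) − 1/τB)`,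
`B₂ = 1/(τCρC) − I₀` and `B₂·C₂ > 0`, the two roots of
`λ² + (I₀/(τI(1/(τCρC) − I₀)))·λ + α·ρC·B₂·C₂` are real if and only if
`4/(τBτC³ρC²) − (4I₀/(τC²ρC))(1/τI + 3/τB) + I₀²(1/τI² + 8/(τIτC) + 12/(τBτC))
 − 4ρC·I₀³(1/τI + 1/τB) ≥ 0`. -/
theorem lambda23_real_iff
    (ρC ρL α I₀ τC τB τI : ℝ)
    (hρC : 0 < ρC) (hρL : 0 < ρL) (hα : 0 < α) (hI₀ : 0 ≤ I₀)
    (hτC : 0 < τC) (hτB : 0 < τB) (hτI : 0 < τI)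
    (hlt : I₀ < 1 / (τC * ρC))
    (C₂ B₂ : ℝ)
    (hC₂ : C₂ = (1 / α) * (I₀ / (τI * (1 / (τC * ρC) - I₀)) - 1 / τB))
    (hB₂ : B₂ = 1 / (τC * ρC) - I₀)
    (hBC : 0 < B₂ * C₂) :
    (∀ z : ℂ,
        z ^ 2 + ((I₀ / (τI * (1 / (τC * ρC) - I₀)) : ℝ) : ℂ) * z +
            ((α * ρC * B₂ * C₂ : ℝ) : ℂ) = 0 → z.im = 0) ↔
      4 / (τB * τC ^ 3 * ρC ^ 2) -
          (4 * I₀ / (τC ^ 2 * ρC)) * (1 / τI + 3 / τB) +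
          I₀ ^ 2 * (1 / τI ^ 2 + 8 / (τI * τC) + 12 / (τB * τC)) -
          4 * ρC * I₀ ^ 3 * (1 / τI + 1 / τB) ≥ 0 := by
  have hB₂pos : 0 < B₂ := by rw [hB₂]; linarith
  rw [quad_roots_real_iff]
  set b := I₀ / (τI * (1 / (τC * ρC) - I₀)) with hb
  set c := α * ρC * B₂ * C₂ with hc
  have hsum : 0 < B₂ + I₀ := by linarith
  have hρ' : ρC = 1 / (τC * (B₂ + I₀)) := by
    rw [eq_div_iff (by positivity), hB₂]
    field_simp
    ring
  have hBd : 1 / (τC * ρC) - I₀ = B₂ := hB₂.symm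
  have key : 4 / (τB * τC ^ 3 * ρC ^ 2) -
          (4 * I₀ / (τC ^ 2 * ρC)) * (1 / τI + 3 / τB) +
          I₀ ^ 2 * (1 / τI ^ 2 + 8 / (τI * τC) + 12 / (τB * τC)) -
          4 * ρC * I₀ ^ 3 * (1 / τI + 1 / τB) = (b ^ 2 - 4 * c) * B₂ ^ 2 := by
    rw [hc, hC₂, hb, hBd, hρ']
    field_simp
    ring
  constructor
  · intro h
    rw [key]
    positivity
  · intro h
    rw [key] at h
    nlinarith [sq_nonneg B₂, mul_pos hB₂pos hB₂pos]
end

section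
/- Let ρ_C, ρ_L, α > 0, I_0 ≥ 0 and τ_C, τ_B, τ_I > 0. All three components of the equilibrium P_3 = (ρ_L/α, 1/(τ_C ρ_C) − I_0(1 + τ_B/(τ_I(1 + τ_B ρ_L))), I_0/(τ_I(ρ_L + 1/τ_B))) are non-negative if and only if 0 ≤ I_0 ≤ I_0^crit, where I_0^crit = (1/(τ_C ρ_C))(1 − τ_B/(τ_B + τ_I(1 + τ_B ρ_L))). -/
/-! The first component of `P₃` is always non-negative and the third has the sign of `I₀`.
The second is non-negative iff `I₀ (1 + τB/D) ≤ 1/(τC ρC)` with `D = τI (1 + τB ρL) > 0`,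
and dividing by `1 + τB/D` gives the critical bound, since `(1 + τB/D)⁻¹ = 1 - τB/(τB + D)`. -/

lemma one_sub_div_add_eq_inv_one_add_div {K : Type*} [Field K] {b d : K}
    (hd : d ≠ 0) (hbd : b + d ≠ 0) : 1 - b / (b + d) = (1 + b / d)⁻¹ := by
  rw [one_add_div hd, inv_div, one_sub_div hbd, add_sub_cancel_left, add_comm]

lemma div_nonneg_iff_of_pos {K : Type*} [Field K] [LinearOrder K] [IsStrictOrderedRing K]
    {a b : K} (hb : 0 < b) : 0 ≤ a / b ↔ 0 ≤ a := by
  rw [le_div_iff₀ hb, zero_mul]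

lemma sub_mul_nonneg_iff_le_mul_inv {K : Type*} [Field K] [LinearOrder K] [IsStrictOrderedRing K]
    {a b c : K} (hb : 0 < b) : 0 ≤ c - a * b ↔ a ≤ c * b⁻¹ := by
  rw [sub_nonneg, le_mul_inv_iff₀ hb]

theorem P3_nonneg_iff_general
    (ρC ρL α I₀ τC τB τI : ℝ)
    (hρL : 0 < ρL) (hα : 0 < α)
    (hτB : 0 < τB) (hτI : 0 < τI) :
    (0 ≤ ρL / α ∧
        0 ≤ 1 / (τC * ρC) - I₀ * (1 + τB / (τI * (1 + τB * ρL))) ∧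
        0 ≤ I₀ / (τI * (ρL + 1 / τB))) ↔
      (0 ≤ I₀ ∧
        I₀ ≤ (1 / (τC * ρC)) * (1 - τB / (τB + τI * (1 + τB * ρL)))) := by
  have hD : 0 < τI * (1 + τB * ρL) := by positivity
  have hcrit : 1 - τB / (τB + τI * (1 + τB * ρL)) = (1 + τB / (τI * (1 + τB * ρL)))⁻¹ :=
    one_sub_div_add_eq_inv_one_add_div hD.ne' (by positivity)
  rw [iff_true_intro (by positivity : 0 ≤ ρL / α), true_and,
    sub_mul_nonneg_iff_le_mul_inv (by positivity), ← hcrit,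
    div_nonneg_iff_of_pos (by positivity), and_comm]

/-- **Biological meaningfulness of `P₃`.**
All three components of the equilibrium
`P₃ = (ρL/α, 1/(τCρC) − I₀(1 + τB/(τI(1 + τBρL))), I₀/(τI(ρL + 1/τB)))`
are non-negative if and only if `0 ≤ I₀ ≤ I₀^crit`, where
`I₀^crit = (1/(τCρC))(1 − τB/(τB + τI(1 + τBρL)))`. -/
theorem P3_nonneg_iff
    (ρC ρL α I₀ τC τB τI : ℝ)
    (hρC : 0 < ρC) (hρL : 0 < ρL) (hα : 0 < α) (hI₀ : 0 ≤ I₀)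
    (hτC : 0 < τC) (hτB : 0 < τB) (hτI : 0 < τI) :
    (0 ≤ ρL / α ∧
        0 ≤ 1 / (τC * ρC) - I₀ * (1 + τB / (τI * (1 + τB * ρL))) ∧
        0 ≤ I₀ / (τI * (ρL + 1 / τB))) ↔
      (0 ≤ I₀ ∧
        I₀ ≤ (1 / (τC * ρC)) * (1 - τB / (τB + τI * (1 + τB * ρL)))) :=
  P3_nonneg_iff_general ρC ρL α I₀ τC τB τI hρL hα hτB hτI
end

section
/- Let ρ_C, ρ_L, α > 0, I_0 ≥ 0 and τ_C, τ_B, τ_I > 0. Write L_3 = 1/(τ_C ρ_C) − I_0(1 + τ_B/(τ_I(1 + τ_B ρ_L))) and B_3 = I_0/(τ_I(ρ_L + 1/τ_B)). Then the characteristic polynomial of the Jacobian J evaluated at the equilibrium P_3 = (ρ_L/α, L_3, B_3) equals p(λ) = λ³ + λ²(1/τ_B + ρ_L) + λ ρ_C ρ_L (1/(ρ_C τ_C) − I_0) + ρ_C ρ_L L_3 (1/τ_B + ρ_L). -/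
open Polynomial in
lemma charpoly_fin3_aux (a b c d e f g h i : ℝ) :
    (!![a,b,c;d,e,f;g,h,i] : Matrix (Fin 3) (Fin 3) ℝ).charpoly =
      X^3 - C (a+e+i) * X^2 + C (a*e+a*i+e*i-b*d-c*g-f*h) * X
        - C (a*e*i+b*f*g+c*d*h-a*f*h-b*d*i-c*e*g) := by
  rw [Matrix.charpoly, Matrix.det_fin_three]
  simp [Matrix.charmatrix_apply_eq, Matrix.charmatrix_apply_ne]
  ring

/-- **Characteristic polynomial at `P₃`.**
With `L₃ = 1/(τCρC) − I₀(1 + τB/(τI(1 + τBρL)))` and `B₃ = I₀/(τI(ρL + 1/τB))`, the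
characteristic polynomial of the Jacobian of the CAR T-cell therapy model at the
coexistence equilibrium `P₃ = (ρL/α, L₃, B₃)` equals
`p(λ) = λ³ + λ²(1/τB + ρL) + λ·ρCρL(1/(ρCτC) − I₀) + ρCρL·L₃·(1/τB + ρL)`. -/
theorem charpoly_at_P3
    (ρC ρL α I₀ τC τB τI : ℝ)
    (hρC : 0 < ρC) (hρL : 0 < ρL) (hα : 0 < α) (hI₀ : 0 ≤ I₀)
    (hτC : 0 < τC) (hτB : 0 < τB) (hτI : 0 < τI)
    (L₃ B₃ : ℝ)
    (hL₃ : L₃ = 1 / (τC * ρC) - I₀ * (1 + τB / (τI * (1 + τB * ρL))))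
    (hB₃ : B₃ = I₀ / (τI * (ρL + 1 / τB)))
    (J : ℝ → ℝ → ℝ → Matrix (Fin 3) (Fin 3) ℝ)
    (hJ : J = fun C L B =>
      !![ρC * (L + B + I₀) - 1 / τC, ρC * C, ρC * C;
         -(α * L), ρL - α * C, 0;
         -(α * B), 0, -(α * C) - 1 / τB]) :
    (J (ρL / α) L₃ B₃).charpoly =
      Polynomial.X ^ 3 +
        Polynomial.C (1 / τB + ρL) * Polynomial.X ^ 2 +
        Polynomial.C (ρC * ρL * (1 / (ρC * τC) - I₀)) * Polynomial.X +
        Polynomial.C (ρC * ρL * L₃ * (1 / τB + ρL)) := by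
  have hαC : α * (ρL / α) = ρL := by field_simp
  have h1 : (1 : ℝ) + τB * ρL ≠ 0 := by positivity
  have h2 : ρL + 1 / τB ≠ 0 := by positivity
  subst hJ hL₃ hB₃
  simp only
  rw [charpoly_fin3_aux]
  have key : ∀ A B D a' b' d' : ℝ, A = -a' → B = b' → D = -d' →
      (Polynomial.X^3 - Polynomial.C A * Polynomial.X^2 + Polynomial.C B * Polynomial.X
        - Polynomial.C D : Polynomial ℝ)
      = Polynomial.X^3 + Polynomial.C a' * Polynomial.X^2 + Polynomial.C b' * Polynomial.X
        + Polynomial.C d' := by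
    rintro A B D a' b' d' rfl rfl rfl
    simp only [map_neg]
    ring
  apply key
  · field_simp
    ring
  · field_simp
    ring
  · field_simp
    ring
end

section
/- Let ρ_C, ρ_L, α > 0 and τ_C, τ_B, τ_I > 0, and suppose 0 < I_0 < I_0^crit where I_0^crit = (1/(τ_C ρ_C))(1 − τ_B/(τ_B + τ_I(1 + τ_B ρ_L))). Write L_3 = 1/(τ_C ρ_C) − I_0(1 + τ_B/(τ_I(1 + τ_B ρ_L))). Then every complex root of the cubic p(λ) = λ³ + λ²(1/τ_B + ρ_L) + λ ρ_C ρ_L (1/(ρ_C τ_C) − I_0) + ρ_C ρ_L L_3 (1/τ_B + ρ_L) has strictly negative real part; i.e. the coexistence equilibrium P_3 is linearly asymptotically stable. -/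
/-!
The cubic `λ³ + aλ² + bλ + c` is Hurwitz as soon as `a, b, c > 0` and `c < ab`: for a root
`x + iy` with `x ≥ 0`, either `y = 0` and every term is nonnegative with `c > 0`, or the imaginary
part forces `y² = 3x² + 2ax + b` and the real part becomes `-8x³ - 8ax² - 2(a² + b)x - (ab - c) < 0`.
For the characteristic polynomial at `P₃`, `I₀ < I₀^crit` is exactly `L₃ > 0`, and
`1/(ρCτC) - I₀ - L₃ = I₀τB/(τI(1 + τBρL)) > 0` gives `c < ab`.
-/

theorem Complex.re_neg_of_cubic_eq_zero {a b c : ℝ} (ha : 0 < a) (hb : 0 < b) (hc : 0 < c)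
    (hab : c < a * b) {z : ℂ} (hz : z ^ 3 + (a : ℂ) * z ^ 2 + (b : ℂ) * z + (c : ℂ) = 0) :
    z.re < 0 := by
  obtain ⟨x, y⟩ := z
  simp only [Complex.ext_iff, Complex.add_re, Complex.add_im, Complex.mul_re, Complex.mul_im,
    pow_succ, pow_zero, one_mul, Complex.ofReal_re, Complex.ofReal_im, Complex.zero_re,
    Complex.zero_im] at hz
  obtain ⟨hre, him⟩ := hz
  by_contra! hx
  have hfactor : y * (3 * x ^ 2 - y ^ 2 + 2 * a * x + b) = 0 := by linear_combination him
  rcases mul_eq_zero.1 hfactor with rfl | hy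
  · nlinarith [mul_nonneg (mul_nonneg hx hx) hx, mul_nonneg ha.le (mul_nonneg hx hx),
      mul_nonneg hb.le hx]
  · have hre' : -8 * x ^ 3 - 8 * a * x ^ 2 - 2 * (a ^ 2 + b) * x - (a * b - c) = 0 := by
      linear_combination hre - (3 * x + a) * hy
    nlinarith [mul_nonneg (mul_nonneg hx hx) hx, mul_nonneg ha.le (mul_nonneg hx hx),
      mul_nonneg (add_nonneg (sq_nonneg a) hb.le) hx]

theorem pos_one_div_sub_mul_one_add_div_iff {k E β I : ℝ} (hk : 0 < k) (hE : 0 < E)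
    (hβ : 0 < β) : 0 < 1 / k - I * (1 + β / E) ↔ I < 1 / k * (1 - β / (β + E)) := by
  have hβE : 0 < β + E := by positivity
  rw [sub_pos, one_add_div hE.ne', one_sub_div hβE.ne', add_sub_cancel_left, mul_div_assoc',
    div_lt_div_iff₀ hE hk, one_div_mul_eq_div, lt_div_iff₀ hk, lt_div_iff₀ hβE, one_mul]
  constructor <;> intro h <;> linarith [show I * (E + β) * k = I * k * (β + E) by ring]

theorem P3_linearly_stable_general
    (ρC ρL I₀ τC τB τI : ℝ)
    (hρC : 0 < ρC) (hρL : 0 < ρL)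
    (hτC : 0 < τC) (hτB : 0 < τB) (hτI : 0 < τI)
    (hI₀pos : 0 < I₀)
    (hI₀crit : I₀ < (1 / (τC * ρC)) * (1 - τB / (τB + τI * (1 + τB * ρL))))
    (L₃ : ℝ)
    (hL₃ : L₃ = 1 / (τC * ρC) - I₀ * (1 + τB / (τI * (1 + τB * ρL)))) :
    ∀ z : ℂ,
      z ^ 3 + ((1 / τB + ρL : ℝ) : ℂ) * z ^ 2 +
          ((ρC * ρL * (1 / (ρC * τC) - I₀) : ℝ) : ℂ) * z +
          ((ρC * ρL * L₃ * (1 / τB + ρL) : ℝ) : ℂ) = 0 →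
        z.re < 0 := by
  intro z hz
  have hE : 0 < τI * (1 + τB * ρL) := by positivity
  have hL₃pos : 0 < L₃ := hL₃ ▸
    (pos_one_div_sub_mul_one_add_div_iff (by positivity) hE hτB).2 hI₀crit
  have hgap : 1 / (ρC * τC) - I₀ - L₃ = I₀ * τB / (τI * (1 + τB * ρL)) := by
    rw [hL₃]
    ring
  have hL₃lt : L₃ < 1 / (ρC * τC) - I₀ := by
    have : 0 < I₀ * τB / (τI * (1 + τB * ρL)) := by positivity
    linarith
  have ha : 0 < 1 / τB + ρL := by positivity
  refine Complex.re_neg_of_cubic_eq_zero ha (mul_pos (mul_pos hρC hρL) (hL₃pos.trans hL₃lt))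
    (by positivity) ?_ hz
  have := mul_lt_mul_of_pos_left hL₃lt (mul_pos (mul_pos hρC hρL) ha)
  linarith

/-- **Asymptotic stability of `P₃` (Routh–Hurwitz).**
If `0 < I₀ < I₀^crit`, where
`I₀^crit = (1/(τCρC))(1 − τB/(τB + τI(1 + τBρL)))`, and
`L₃ = 1/(τCρC) − I₀(1 + τB/(τI(1 + τBρL)))`, then every complex root of the cubic
`p(λ) = λ³ + λ²(1/τB + ρL) + λ·ρCρL(1/(ρCτC) − I₀) + ρCρL·L₃·(1/τB + ρL)` has
strictly negative real part; i.e. the coexistence equilibrium `P₃` is linearly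
asymptotically stable. -/
theorem P3_linearly_stable
    (ρC ρL α I₀ τC τB τI : ℝ)
    (hρC : 0 < ρC) (hρL : 0 < ρL) (hα : 0 < α)
    (hτC : 0 < τC) (hτB : 0 < τB) (hτI : 0 < τI)
    (hI₀pos : 0 < I₀)
    (hI₀crit : I₀ < (1 / (τC * ρC)) * (1 - τB / (τB + τI * (1 + τB * ρL))))
    (L₃ : ℝ)
    (hL₃ : L₃ = 1 / (τC * ρC) - I₀ * (1 + τB / (τI * (1 + τB * ρL)))) :
    ∀ z : ℂ,
      z ^ 3 + ((1 / τB + ρL : ℝ) : ℂ) * z ^ 2 +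
          ((ρC * ρL * (1 / (ρC * τC) - I₀) : ℝ) : ℂ) * z +
          ((ρC * ρL * L₃ * (1 / τB + ρL) : ℝ) : ℂ) = 0 →
        z.re < 0 :=
  P3_linearly_stable_general ρC ρL I₀ τC τB τI hρC hρL hτC hτB hτI hI₀pos hI₀crit L₃ hL₃
end

section
/- Let ρ_C, ρ_L, α > 0 and τ_C, τ_B, τ_I > 0, and set I_0 = 0. Then the characteristic polynomial of the Jacobian J evaluated at the equilibrium P_3 = (ρ_L/α, 1/(τ_C ρ_C), 0) factors as (λ + (1/τ_B + ρ_L))(λ² + ρ_L/τ_C); in particular J(P_3) has the negative real eigenvalue −(1/τ_B + ρ_L) and the pair of purely imaginary eigenvalues ±i√(ρ_L/τ_C). -/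
open Polynomial Matrix in
private lemma charpoly_aux (a b d p : ℝ) (hab : a * b = p) :
    (!![0, a, a; -b, 0, 0; 0, 0, -d] : Matrix (Fin 3) (Fin 3) ℝ).charpoly =
        (X + C d) * (X ^ 2 + C p) := by
  rw [Matrix.charpoly, Matrix.det_fin_three]
  simp [charmatrix_apply_eq, charmatrix_apply_ne, Matrix.vecHead, Matrix.vecTail]
  rw [← hab]
  push_cast [Polynomial.C_mul, Polynomial.C_neg]
  ring

/-- **Hopf spectral condition at `I₀ = 0`.**
At `I₀ = 0`, the characteristic polynomial of the Jacobian of the CAR T-cell therapy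
model at the equilibrium `P₃ = (ρL/α, 1/(τCρC), 0)` factors as
`(λ + (1/τB + ρL))(λ² + ρL/τC)`; in particular `J(P₃)` has the negative real
eigenvalue `−(1/τB + ρL)` and the pair of purely imaginary eigenvalues
`±i√(ρL/τC)`. -/
theorem hopf_spectral_condition
    (ρC ρL α τC τB τI : ℝ)
    (hρC : 0 < ρC) (hρL : 0 < ρL) (hα : 0 < α)
    (hτC : 0 < τC) (hτB : 0 < τB) (hτI : 0 < τI)
    (I₀ : ℝ) (hI₀ : I₀ = 0)
    (J : ℝ → ℝ → ℝ → Matrix (Fin 3) (Fin 3) ℝ)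
    (hJ : J = fun C L B =>
      !![ρC * (L + B + I₀) - 1 / τC, ρC * C, ρC * C;
         -(α * L), ρL - α * C, 0;
         -(α * B), 0, -(α * C) - 1 / τB]) :
    (J (ρL / α) (1 / (τC * ρC)) 0).charpoly =
        (Polynomial.X + Polynomial.C (1 / τB + ρL)) *
        (Polynomial.X ^ 2 + Polynomial.C (ρL / τC)) ∧
      (Polynomial.aeval ((-(1 / τB + ρL) : ℝ) : ℂ))
          (J (ρL / α) (1 / (τC * ρC)) 0).charpoly = 0 ∧
      (Polynomial.aeval (Complex.I * (Real.sqrt (ρL / τC) : ℂ)))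
          (J (ρL / α) (1 / (τC * ρC)) 0).charpoly = 0 ∧
      (Polynomial.aeval (-(Complex.I * (Real.sqrt (ρL / τC) : ℂ))))
          (J (ρL / α) (1 / (τC * ρC)) 0).charpoly = 0 := by
  subst hI₀ hJ
  have hM : (fun C L B =>
      !![ρC * (L + B + (0:ℝ)) - 1 / τC, ρC * C, ρC * C;
         -(α * L), ρL - α * C, 0;
         -(α * B), 0, -(α * C) - 1 / τB]) (ρL / α) (1 / (τC * ρC)) 0 =
      !![0, ρC * (ρL / α), ρC * (ρL / α);
         -(α * (1 / (τC * ρC))), 0, 0;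
         0, 0, -(1 / τB + ρL)] := by
    ext i j
    fin_cases i <;> fin_cases j <;> norm_num <;> field_simp <;> ring
  rw [hM]
  have hab : ρC * (ρL / α) * (α * (1 / (τC * ρC))) = ρL / τC := by
    field_simp
  have hc := charpoly_aux (ρC * (ρL / α)) (α * (1 / (τC * ρC))) (1 / τB + ρL)
    (ρL / τC) hab
  refine ⟨hc, ?_, ?_, ?_⟩ <;> rw [hc] <;>
    simp only [map_mul, map_add, map_pow, Polynomial.aeval_X, Polynomial.aeval_C]
  · simp only [Complex.coe_algebraMap]
    push_cast
    ring
  · have hp : (0:ℝ) ≤ ρL / τC := le_of_lt (div_pos hρL hτC)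
    have h2 : (Complex.I * (Real.sqrt (ρL / τC) : ℂ)) ^ 2 = -((ρL / τC : ℝ) : ℂ) := by
      rw [mul_pow, Complex.I_sq]
      push_cast
      rw [← Complex.ofReal_pow, Real.sq_sqrt hp]
      push_cast
      ring
    simp only [Complex.coe_algebraMap]
    rw [h2]
    push_cast
    ring
  · have hp : (0:ℝ) ≤ ρL / τC := le_of_lt (div_pos hρL hτC)
    have h2 : (-(Complex.I * (Real.sqrt (ρL / τC) : ℂ))) ^ 2 = -((ρL / τC : ℝ) : ℂ) := by
      rw [neg_pow, mul_pow, Complex.I_sq]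
      push_cast
      rw [← Complex.ofReal_pow, Real.sq_sqrt hp]
      push_cast
      ring
    simp only [Complex.coe_algebraMap]
    rw [h2]
    push_cast
    ring
end

section
/- Let ρ_C, ρ_L, α > 0 and τ_C, τ_B, τ_I > 0, and set I_0 = I_0^crit = (1/(τ_C ρ_C))(1 − τ_B/(τ_B + τ_I(1 + τ_B ρ_L))). Then the equilibria P_2 = ((1/α)(I_0/(τ_I(1/(τ_C ρ_C) − I_0)) − 1/τ_B), 0, 1/(τ_C ρ_C) − I_0) and P_3 = (ρ_L/α, 1/(τ_C ρ_C) − I_0(1 + τ_B/(τ_I(1 + τ_B ρ_L))), I_0/(τ_I(ρ_L + 1/τ_B))) coincide: P_2 = P_3. (This is the collision of equilibria at the transcritical bifurcation between P_2 and P_3.) -/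
/-!
Write `K = 1/(τC ρC)` and `s = 1 + τB ρL`. At the critical value `I₀ = K τI s / (τB + τI s)`,
hence `K - I₀ = K τB / (τB + τI s)`; in particular `I₀ / (τI (K - I₀)) = s / τB`. Each coordinate
identity is then a one-line rational simplification.
-/

namespace TranscriticalCollision

variable {K ρL τB τI I : ℝ}

lemma crit_eq (hτB : 0 < τB) (hτI : 0 < τI) (hρL : 0 < ρL)
    (hI : I = K * (1 - τB / (τB + τI * (1 + τB * ρL)))) :
    I = K * (τI * (1 + τB * ρL)) / (τB + τI * (1 + τB * ρL)) := by
  have hD : τB + τI * (1 + τB * ρL) ≠ 0 := by positivity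
  rw [hI]
  field_simp
  ring

lemma sub_crit_eq (hτB : 0 < τB) (hτI : 0 < τI) (hρL : 0 < ρL)
    (hI : I = K * (1 - τB / (τB + τI * (1 + τB * ρL)))) :
    K - I = K * τB / (τB + τI * (1 + τB * ρL)) := by
  have hD : τB + τI * (1 + τB * ρL) ≠ 0 := by positivity
  rw [crit_eq hτB hτI hρL hI]
  field_simp
  ring

lemma div_sub_crit_sub_inv (hK : K ≠ 0) (hτB : 0 < τB) (hτI : 0 < τI) (hρL : 0 < ρL)
    (hI : I = K * (1 - τB / (τB + τI * (1 + τB * ρL)))) :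
    I / (τI * (K - I)) - 1 / τB = ρL := by
  have hD : τB + τI * (1 + τB * ρL) ≠ 0 := by positivity
  rw [sub_crit_eq hτB hτI hρL hI, crit_eq hτB hτI hρL hI]
  field_simp
  ring

lemma sub_crit_mul_eq_zero (hτB : 0 < τB) (hτI : 0 < τI) (hρL : 0 < ρL)
    (hI : I = K * (1 - τB / (τB + τI * (1 + τB * ρL)))) :
    K - I * (1 + τB / (τI * (1 + τB * ρL))) = 0 := by
  have hD : τB + τI * (1 + τB * ρL) ≠ 0 := by positivity
  rw [crit_eq hτB hτI hρL hI]
  field_simp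
  ring

lemma sub_crit_eq_div (hτB : 0 < τB) (hτI : 0 < τI) (hρL : 0 < ρL)
    (hI : I = K * (1 - τB / (τB + τI * (1 + τB * ρL)))) :
    K - I = I / (τI * (ρL + 1 / τB)) := by
  have hD : τB + τI * (1 + τB * ρL) ≠ 0 := by positivity
  rw [sub_crit_eq hτB hτI hρL hI, crit_eq hτB hτI hρL hI]
  field_simp
  ring

end TranscriticalCollision

theorem P2_eq_P3_at_transcritical_general
    (ρC ρL α τC τB τI : ℝ)
    (hρC : 0 < ρC) (hρL : 0 < ρL)
    (hτC : 0 < τC) (hτB : 0 < τB) (hτI : 0 < τI)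
    (I₀ : ℝ)
    (hI₀ : I₀ = (1 / (τC * ρC)) * (1 - τB / (τB + τI * (1 + τB * ρL)))) :
    ((1 / α) * (I₀ / (τI * (1 / (τC * ρC) - I₀)) - 1 / τB), (0 : ℝ),
        1 / (τC * ρC) - I₀) =
      (ρL / α,
        1 / (τC * ρC) - I₀ * (1 + τB / (τI * (1 + τB * ρL))),
        I₀ / (τI * (ρL + 1 / τB))) := by
  have hK : 1 / (τC * ρC) ≠ 0 := by positivity
  refine Prod.ext ?_ (Prod.ext ?_ ?_)
  · rw [TranscriticalCollision.div_sub_crit_sub_inv hK hτB hτI hρL hI₀, one_div_mul_eq_div]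
  · exact (TranscriticalCollision.sub_crit_mul_eq_zero hτB hτI hρL hI₀).symm
  · exact TranscriticalCollision.sub_crit_eq_div hτB hτI hρL hI₀

/-- **Transcritical bifurcation between `P₂` and `P₃`.**
At `I₀ = I₀^crit = (1/(τCρC))(1 − τB/(τB + τI(1 + τBρL)))`, the equilibria
`P₂ = ((1/α)(I₀/(τI(1/(τCρC) − I₀)) − 1/τB), 0, 1/(τCρC) − I₀)` and
`P₃ = (ρL/α, 1/(τCρC) − I₀(1 + τB/(τI(1 + τBρL))), I₀/(τI(ρL + 1/τB)))`
coincide. -/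
theorem P2_eq_P3_at_transcritical
    (ρC ρL α τC τB τI : ℝ)
    (hρC : 0 < ρC) (hρL : 0 < ρL) (hα : 0 < α)
    (hτC : 0 < τC) (hτB : 0 < τB) (hτI : 0 < τI)
    (I₀ : ℝ)
    (hI₀ : I₀ = (1 / (τC * ρC)) * (1 - τB / (τB + τI * (1 + τB * ρL)))) :
    ((1 / α) * (I₀ / (τI * (1 / (τC * ρC) - I₀)) - 1 / τB), (0 : ℝ),
        1 / (τC * ρC) - I₀) =
      (ρL / α,
        1 / (τC * ρC) - I₀ * (1 + τB / (τI * (1 + τB * ρL))),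
        I₀ / (τI * (ρL + 1 / τB))) :=
  P2_eq_P3_at_transcritical_general ρC ρL α τC τB τI hρC hρL hτC hτB hτI I₀ hI₀
end

section
/- Let ρ_C, ρ_L, α, I_0 be non-negative reals and τ_C, τ_B, τ_I positive, and suppose ρ_C I_0 − 1/τ_C > 0. Let C, L, B : ℝ → ℝ be differentiable and satisfy, for all t ≥ 0, C'(t) = C(t)(ρ_C(L(t)+B(t)+I_0) − 1/τ_C), L'(t) = ρ_L L(t) − α C(t) L(t), B'(t) = I_0/τ_I − B(t)(α C(t) + 1/τ_B), with C(0) > 0, L(0) ≥ 0, B(0) ≥ 0. Then, setting k = ρ_C I_0 − 1/τ_C > 0, one has C(t) ≥ C(0) e^{k t} for all t ≥ 0; in particular C(t) → ∞ as t → ∞, so the solution is unbounded. -/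
open Filter Set Real intervalIntegral

/-!
Along a solution, `L` and `B` obey linear differential inequalities `f' ≥ f·a(t)`, and an
integrating factor `exp (-∫₀ᵗ a)` shows that such an `f` dominates `f 0 · exp (∫₀ᵗ a)`; hence
`L, B ≥ 0`. Then the growth rate of `C` is `ρC (L + B + I₀) - 1/τC ≥ ρC I₀ - 1/τC = k > 0`,
and the same comparison gives `C t ≥ C 0 · e^{kt}`.
-/

theorem mul_exp_integral_le_of_le_deriv {f a : ℝ → ℝ} (hf : Differentiable ℝ f)
    (ha : Continuous a) (h : ∀ t, 0 < t → f t * a t ≤ deriv f t) {t : ℝ} (ht : 0 ≤ t) :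
    f 0 * exp (∫ s in (0)..t, a s) ≤ f t := by
  set A : ℝ → ℝ := fun u => ∫ s in (0)..u, a s
  have hA : ∀ u, HasDerivAt A (a u) u := fun u =>
    integral_hasDerivAt_right (ha.intervalIntegrable _ _) (ha.stronglyMeasurableAtFilter _ _)
      ha.continuousAt
  set G : ℝ → ℝ := fun u => f u * exp (-A u)
  have hG : ∀ u, HasDerivAt G ((deriv f u - f u * a u) * exp (-A u)) u := fun u =>
    ((hf u).hasDerivAt.fun_mul (hA u).fun_neg.exp).congr_deriv (by ring)
  have hG_mono : MonotoneOn G (Ici 0) :=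
    monotoneOn_of_deriv_nonneg (convex_Ici 0)
      (continuous_iff_continuousAt.2 fun u => (hG u).continuousAt).continuousOn
      (fun u _ => (hG u).differentiableAt.differentiableWithinAt)
      (fun u hu => by
        rw [interior_Ici] at hu
        rw [(hG u).deriv]
        exact mul_nonneg (sub_nonneg.2 (h u hu)) (exp_pos _).le)
  have hG_le : f 0 ≤ f t * exp (-A t) := by
    simpa [G, A] using hG_mono self_mem_Ici ht ht
  calc f 0 * exp (A t) ≤ f t * exp (-A t) * exp (A t) := by gcongr
    _ = f t := by rw [mul_assoc, ← exp_add, neg_add_cancel, exp_zero, mul_one]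

theorem nonneg_of_le_deriv {f a : ℝ → ℝ} (hf : Differentiable ℝ f) (ha : Continuous a)
    (h : ∀ t, 0 < t → f t * a t ≤ deriv f t) (h0 : 0 ≤ f 0) {t : ℝ} (ht : 0 ≤ t) :
    0 ≤ f t :=
  (mul_nonneg h0 (exp_pos _).le).trans (mul_exp_integral_le_of_le_deriv hf ha h ht)

theorem mul_exp_le_of_le_deriv {f a : ℝ → ℝ} {k : ℝ} (hf : Differentiable ℝ f)
    (ha : Continuous a) (hk : ∀ t, 0 ≤ t → k ≤ a t) (h : ∀ t, 0 < t → f t * a t ≤ deriv f t)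
    (h0 : 0 ≤ f 0) {t : ℝ} (ht : 0 ≤ t) :
    f 0 * exp (k * t) ≤ f t := by
  have h_int : k * t ≤ ∫ s in (0)..t, a s := by
    simpa [mul_comm] using
      integral_mono_on ht (intervalIntegrable_const (μ := MeasureTheory.volume))
        (ha.intervalIntegrable 0 t) fun s hs => hk s hs.1
  calc f 0 * exp (k * t) ≤ f 0 * exp (∫ s in (0)..t, a s) := by gcongr
    _ ≤ f t := mul_exp_integral_le_of_le_deriv hf ha h ht

theorem CART_unbounded_in_R4_general
    (ρC ρL α I₀ τC τB τI : ℝ)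
    (hρC : 0 ≤ ρC) (hI₀ : 0 ≤ I₀)
    (hτI : 0 < τI)
    (hk : 0 < ρC * I₀ - 1 / τC)
    (C L B : ℝ → ℝ)
    (hC : Differentiable ℝ C) (hL : Differentiable ℝ L) (hB : Differentiable ℝ B)
    (hCode : ∀ t : ℝ, 0 ≤ t →
      deriv C t = C t * (ρC * (L t + B t + I₀) - 1 / τC))
    (hLode : ∀ t : ℝ, 0 ≤ t →
      deriv L t = ρL * L t - α * C t * L t)
    (hBode : ∀ t : ℝ, 0 ≤ t →
      deriv B t = I₀ / τI - B t * (α * C t + 1 / τB))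
    (hC0 : 0 < C 0) (hL0 : 0 ≤ L 0) (hB0 : 0 ≤ B 0) :
    (∀ t : ℝ, 0 ≤ t → C 0 * Real.exp ((ρC * I₀ - 1 / τC) * t) ≤ C t) ∧
      Tendsto C atTop atTop := by
  have hC_cont := hC.continuous
  have hL_cont := hL.continuous
  have hB_cont := hB.continuous
  have hL_nonneg : ∀ t, 0 ≤ t → 0 ≤ L t := fun t =>
    nonneg_of_le_deriv (a := fun s => ρL - α * C s) hL (by fun_prop)
      (fun s hs => le_of_eq (by rw [hLode s hs.le]; ring)) hL0
  have hB_nonneg : ∀ t, 0 ≤ t → 0 ≤ B t := fun t =>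
    nonneg_of_le_deriv (a := fun s => -(α * C s + 1 / τB)) hB (by fun_prop)
      (fun s hs => by rw [hBode s hs.le]; linarith [div_nonneg hI₀ hτI.le]) hB0
  have h_growth : ∀ t, 0 ≤ t → C 0 * exp ((ρC * I₀ - 1 / τC) * t) ≤ C t := fun t =>
    mul_exp_le_of_le_deriv (a := fun s => ρC * (L s + B s + I₀) - 1 / τC) hC
      (by fun_prop)
      (fun s hs => by
        have := mul_nonneg hρC (add_nonneg (hL_nonneg s hs) (hB_nonneg s hs))
        linarith)
      (fun s hs => (hCode s hs.le).ge) hC0.le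
  refine ⟨h_growth, tendsto_atTop_mono' atTop (eventually_atTop.2 ⟨0, h_growth⟩) ?_⟩
  exact (tendsto_exp_atTop.comp (tendsto_id.const_mul_atTop hk)).const_mul_atTop hC0

/-- **Unbounded growth of CAR T-cells in region `R₄`.**
If `ρC·I₀ − 1/τC > 0` and `C, L, B` solve the CAR T-cell therapy system for `t ≥ 0`
with `C(0) > 0`, `L(0) ≥ 0`, `B(0) ≥ 0`, then, setting `k = ρC·I₀ − 1/τC > 0`, one
has `C(t) ≥ C(0)·e^{kt}` for all `t ≥ 0`; in particular `C(t) → ∞` as `t → ∞`, so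
the solution is unbounded. -/
theorem CART_unbounded_in_R4
    (ρC ρL α I₀ τC τB τI : ℝ)
    (hρC : 0 ≤ ρC) (hρL : 0 ≤ ρL) (hα : 0 ≤ α) (hI₀ : 0 ≤ I₀)
    (hτC : 0 < τC) (hτB : 0 < τB) (hτI : 0 < τI)
    (hk : 0 < ρC * I₀ - 1 / τC)
    (C L B : ℝ → ℝ)
    (hC : Differentiable ℝ C) (hL : Differentiable ℝ L) (hB : Differentiable ℝ B)
    (hCode : ∀ t : ℝ, 0 ≤ t →
      deriv C t = C t * (ρC * (L t + B t + I₀) - 1 / τC))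
    (hLode : ∀ t : ℝ, 0 ≤ t →
      deriv L t = ρL * L t - α * C t * L t)
    (hBode : ∀ t : ℝ, 0 ≤ t →
      deriv B t = I₀ / τI - B t * (α * C t + 1 / τB))
    (hC0 : 0 < C 0) (hL0 : 0 ≤ L 0) (hB0 : 0 ≤ B 0) :
    (∀ t : ℝ, 0 ≤ t → C 0 * Real.exp ((ρC * I₀ - 1 / τC) * t) ≤ C t) ∧
      Tendsto C atTop atTop :=
  CART_unbounded_in_R4_general ρC ρL α I₀ τC τB τI hρC hI₀ hτI hk C L B hC hL hB hCode hLode hBode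
    hC0 hL0 hB0
end
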